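/- Let (Z_n)_{n∈ℕ} be real-valued random variables on a common probability space and let m ∈ ℕ, m ≥ 1. For j ∈ {1, …, m} and i ∈ ℕ define S_i^j := Σ_{k=1}^i Z_{(k−1)m+j}. Assume that for every j ∈ {1, …, m}, (1/i) S_i^j → 0 in probability as i → ∞. Then (1/n) Σ_{k=1}^n Z_k → 0 in probability as n → ∞. -/

import Mathlib

/-!
Split the partial sum `Z_1 + ⋯ + Z_n` according to the residue class of the index modulo `m`:
the class of `j` contributes the partial sum `S^j_{c_j(n)}` of the `j`-th subsequence, where
`c_j(n) = ⌊(n + m - j) / m⌋ ≤ n`, the number of `k ≤ n` in that class, tends to infinity.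
Hence `S^j_{c_j(n)} / n` is dominated by `S^j_{c_j(n)} / c_j(n)`, which tends to `0` in
probability, and a sum of `m` sequences tending to `0` in probability does so too, by the
union bound `P(|∑ a_j| > δ) ≤ ∑ P(|a_j| > δ / m)`.
-/

open MeasureTheory Filter Finset

namespace Nat

variable {m j : ℕ}

theorem dvd_add_sub_succ_iff (hj : 1 ≤ j) (hjm : j ≤ m) (n : ℕ) :
    m ∣ n + m - j + 1 ↔ j = n % m + 1 := by
  have hmod : n % m < m := Nat.mod_lt n (by omega)
  have hdecomp : n + m - j + 1 = n / m * m + (n % m + 1 + m - j) := by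
    have := Nat.div_add_mod' n m
    omega
  rw [hdecomp, Nat.dvd_add_right (Nat.dvd_mul_left m _)]
  constructor
  · intro hdvd
    have := Nat.eq_of_dvd_of_lt_two_mul (by omega) hdvd (by omega)
    omega
  · rintro rfl
    rw [show n % m + 1 + m - (n % m + 1) = m by omega]

theorem add_succ_sub_div (hj : 1 ≤ j) (hjm : j ≤ m) (n : ℕ) :
    (n + 1 + m - j) / m = (n + m - j) / m + if j = n % m + 1 then 1 else 0 := by
  rw [show n + 1 + m - j = n + m - j + 1 by omega, Nat.succ_div,
    if_congr (dvd_add_sub_succ_iff hj hjm n) rfl rfl]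

theorem add_sub_mod_succ_div_mul_add (hm : 0 < m) (n : ℕ) :
    (n + m - (n % m + 1)) / m * m + (n % m + 1) = n + 1 := by
  have hmod : n % m < m := Nat.mod_lt n hm
  have hdecomp : n + m - (n % m + 1) = m - 1 + n / m * m := by
    have := Nat.div_add_mod' n m
    omega
  rw [hdecomp, Nat.add_mul_div_right _ _ hm, Nat.div_eq_of_lt (by omega), zero_add]
  have := Nat.div_add_mod' n m
  omega

theorem add_sub_div_le (hm : 1 ≤ m) (hj : 1 ≤ j) (n : ℕ) : (n + m - j) / m ≤ n := by
  have : n ≤ m * n := Nat.le_mul_of_pos_left n hm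
  rw [Nat.div_le_iff_le_mul_add_pred (by omega)]
  omega

theorem tendsto_add_sub_div_atTop (hm : 1 ≤ m) (hjm : j ≤ m) :
    Tendsto (fun n => (n + m - j) / m) atTop atTop :=
  tendsto_atTop_mono (fun n => Nat.div_le_div_right (by omega))
    (Nat.tendsto_div_const_atTop (by omega))

end Nat

theorem Finset.sum_range_succ_eq_sum_Icc_sum_range {M : Type*} [AddCommMonoid M] {m : ℕ}
    (hm : 0 < m) (f : ℕ → M) (n : ℕ) :
    ∑ k ∈ range n, f (k + 1) = ∑ j ∈ Icc 1 m, ∑ k ∈ range ((n + m - j) / m), f (k * m + j) := by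
  induction n with
  | zero =>
    refine (sum_eq_zero fun j hj => ?_).symm
    rw [Nat.div_eq_of_lt (by grind), sum_range_zero]
  | succ n ih =>
    have hstep : ∀ j ∈ Icc 1 m, ∑ k ∈ range ((n + 1 + m - j) / m), f (k * m + j)
        = ∑ k ∈ range ((n + m - j) / m), f (k * m + j)
          + if j = n % m + 1 then f (n + 1) else 0 := by
      intro j hj
      obtain ⟨hj1, hjm⟩ := mem_Icc.mp hj
      rw [Nat.add_succ_sub_div hj1 hjm]
      split_ifs with hjn
      · subst hjn
        rw [sum_range_succ, Nat.add_sub_mod_succ_div_mul_add hm]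
      · rw [add_zero, add_zero]
    have hmem : n % m + 1 ∈ Icc 1 m := mem_Icc.mpr ⟨by omega, Nat.mod_lt n hm⟩
    rw [sum_range_succ, ih, sum_congr rfl hstep, sum_add_distrib, sum_ite_eq', if_pos hmem]

section Probability

variable {Ω : Type*} [MeasurableSpace Ω] {μ : Measure Ω}

theorem measure_abs_sum_gt_le {ι : Type*} (s : Finset ι) (X : ι → Ω → ℝ) {δ : ℝ} (hδ : 0 ≤ δ) :
    μ {ω | δ < |∑ i ∈ s, X i ω|} ≤ ∑ i ∈ s, μ {ω | δ / #s < |X i ω|} := by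
  refine (measure_mono fun ω hω => ?_).trans (measure_biUnion_finset_le s _)
  by_contra hnot
  simp only [Set.mem_iUnion, Set.mem_ofPred_eq, not_exists, not_lt] at hnot
  have : |∑ i ∈ s, X i ω| ≤ δ :=
    calc |∑ i ∈ s, X i ω| ≤ ∑ i ∈ s, |X i ω| := abs_sum_le_sum_abs _ _
      _ ≤ ∑ _i ∈ s, δ / #s := sum_le_sum hnot
      _ = #s * (δ / #s) := by rw [sum_const, nsmul_eq_mul]
      _ ≤ δ := by
        rcases (#s).eq_zero_or_pos with hs | hs
        · simpa [hs] using hδ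
        · rw [mul_div_cancel₀ _ (by positivity)]
  exact (not_lt.mpr this) hω

theorem tendsto_measure_abs_sum_gt {ι κ : Type*} {l : Filter κ} {s : Finset ι}
    {X : ι → κ → Ω → ℝ}
    (h : ∀ i ∈ s, ∀ δ > 0, Tendsto (fun n => μ {ω | δ < |X i n ω|}) l (nhds 0)) :
    ∀ δ > 0, Tendsto (fun n => μ {ω | δ < |∑ i ∈ s, X i n ω|}) l (nhds 0) := by
  intro δ hδ
  have hsum : Tendsto (fun n => ∑ i ∈ s, μ {ω | δ / #s < |X i n ω|}) l (nhds 0) := by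
    rw [← sum_const_zero (s := s)]
    refine tendsto_finsetSum s fun i hi => h i hi _ ?_
    exact div_pos hδ (Nat.cast_pos.mpr (card_pos.mpr ⟨i, hi⟩))
  exact tendsto_of_tendsto_of_tendsto_of_le_of_le tendsto_const_nhds hsum (fun _ => zero_le)
    fun n => measure_abs_sum_gt_le s (fun i => X i n) hδ.le

theorem tendsto_measure_abs_one_div_mul_comp_gt {S : ℕ → Ω → ℝ} {c : ℕ → ℕ}
    (hc : Tendsto c atTop atTop) (hcn : ∀ n, c n ≤ n)
    (h : ∀ δ > 0, Tendsto (fun i : ℕ => μ {ω | δ < |(1 / i : ℝ) * S i ω|}) atTop (nhds 0)) :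
    ∀ δ > 0, Tendsto (fun n : ℕ => μ {ω | δ < |(1 / n : ℝ) * S (c n) ω|}) atTop (nhds 0) := by
  intro δ hδ
  refine tendsto_of_tendsto_of_tendsto_of_le_of_le' tendsto_const_nhds ((h δ hδ).comp hc)
    (Eventually.of_forall fun _ => zero_le) ?_
  filter_upwards [hc.eventually_ge_atTop 1] with n hn
  refine measure_mono fun ω (hω : δ < _) => hω.trans_le ?_
  have hcpos : (0 : ℝ) < c n := by exact_mod_cast hn
  simp only [abs_mul, abs_div, abs_one, Nat.abs_cast]
  gcongr
  exact_mod_cast hcn n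

end Probability

theorem stmt_4_general {Ω : Type*} [MeasurableSpace Ω] (P : Measure Ω)
    (Z : ℕ → Ω → ℝ) (m : ℕ) (hm : 1 ≤ m)
    (h : ∀ j, 1 ≤ j → j ≤ m → ∀ δ > (0 : ℝ), Tendsto
      (fun i : ℕ => P {ω | |(1 / i : ℝ) * ∑ k ∈ Finset.range i, Z (k * m + j) ω| > δ})
      atTop (nhds 0)) :
    ∀ δ > (0 : ℝ), Tendsto
      (fun n : ℕ => P {ω | |(1 / n : ℝ) * ∑ k ∈ Finset.range n, Z (k + 1) ω| > δ})
      atTop (nhds 0) := by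
  have hsplit : ∀ (n : ℕ) ω, (1 / n : ℝ) * ∑ k ∈ range n, Z (k + 1) ω
      = ∑ j ∈ Icc 1 m, (1 / n : ℝ) * ∑ k ∈ range ((n + m - j) / m), Z (k * m + j) ω := by
    intro n ω
    rw [sum_range_succ_eq_sum_Icc_sum_range hm (fun k => Z k ω), mul_sum]
  simp only [gt_iff_lt, hsplit] at h ⊢
  refine tendsto_measure_abs_sum_gt fun j hj => ?_
  obtain ⟨hj1, hjm⟩ := mem_Icc.mp hj
  exact tendsto_measure_abs_one_div_mul_comp_gt (S := fun i ω => ∑ k ∈ range i, Z (k * m + j) ω)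
    (Nat.tendsto_add_sub_div_atTop hm hjm) (Nat.add_sub_div_le hm hj1) (h j hj1 hjm)

/-- Interleaving lemma from the proof of Proposition 3: if each of the `m` subsequences
`S_i^j = Σ_{k=1}^i Z_{(k-1)m+j}` (for offsets `j = 1, …, m`) satisfies a weak law of
large numbers with limit `0`, then so does the full interleaved sequence. -/
theorem stmt_4 {Ω : Type*} [MeasurableSpace Ω] (P : Measure Ω) [IsProbabilityMeasure P]
    (Z : ℕ → Ω → ℝ) (m : ℕ) (hm : 1 ≤ m)
    (h : ∀ j, 1 ≤ j → j ≤ m → ∀ δ > (0 : ℝ), Tendsto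
      (fun i : ℕ => P {ω | |(1 / i : ℝ) * ∑ k ∈ Finset.range i, Z (k * m + j) ω| > δ})
      atTop (nhds 0)) :
    ∀ δ > (0 : ℝ), Tendsto
      (fun n : ℕ => P {ω | |(1 / n : ℝ) * ∑ k ∈ Finset.range n, Z (k + 1) ω| > δ})
      atTop (nhds 0) :=
  stmt_4_general P Z m hm h
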